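/- arXiv:1601.04968 — 2 statements merged into one kernel-verified Lean document; each statement's English description precedes it below -/
import Mathlib

section
/- Let T₀ > 0, let (Tₙ)ₙ be a sequence of times Tₙ ∈ (0, T₀], and let (fₙ)ₙ, (gₙ)ₙ be sequences of non-negative functions fₙ, gₙ : [0, Tₙ) → ℝ with each gₙ measurable and locally integrable, and each fₙ bounded on [0, t] for every t < Tₙ. Suppose that for each n, either Tₙ = T₀ or fₙ(t) → ∞ as t ↑ Tₙ. Suppose further that for all n and all t ∈ [0, Tₙ): sup_{s∈[0,t]} fₙ(s) + ∫₀ᵗ gₙ(s) ds ≤ A(t)·sup_{s∈[0,t]} fₙ(s) + B(t)·(∫₀ᵗ gₙ(s) ds)² + C(t), where A, B, C : [0, T₀] → ℝ are continuous, non-decreasing, non-negative functions with A(0) = 0 and B(0)·C(0) = 0. Then there exists T ∈ (0, T₀] such that for every n, T ≤ Tₙ and fₙ(t) + ∫₀ᵗ gₙ(s) ds ≤ 2·C(T) for all t ∈ [0, T) with t < Tₙ. -/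
open MeasureTheory Set

/-- Appendix Lemma (Lemma A.1): lower bounds on existence times for Galerkin
approximations.  If on `[0, Tₙ)` the quantities `fₙ` and `∫₀ᵗ gₙ` satisfy the
self-improving inequality with coefficients `A, B, C`, and each `Tₙ` is either
`T₀` or a blowup time of `fₙ`, then there is a uniform time `T` on which
`fₙ(t) + ∫₀ᵗ gₙ ≤ 2 C(T)`. -/
theorem appendix_lemma_uniform_time
    (T₀ : ℝ) (hT₀ : 0 < T₀) (T : ℕ → ℝ)
    (hT : ∀ n, T n ∈ Set.Ioc (0 : ℝ) T₀)
    (f g : ℕ → ℝ → ℝ)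
    (hf_nonneg : ∀ n, ∀ t ∈ Set.Ico (0 : ℝ) (T n), 0 ≤ f n t)
    (hg_nonneg : ∀ n, ∀ t ∈ Set.Ico (0 : ℝ) (T n), 0 ≤ g n t)
    (hg_meas : ∀ n, Measurable (g n))
    (hg_int : ∀ n, ∀ t ∈ Set.Ico (0 : ℝ) (T n),
      IntervalIntegrable (g n) MeasureTheory.volume 0 t)
    (hf_bdd : ∀ n, ∀ t ∈ Set.Ico (0 : ℝ) (T n), BddAbove (f n '' Set.Icc 0 t))
    (hblow : ∀ n, T n = T₀ ∨
      (∀ M : ℝ, ∃ δ > (0 : ℝ), ∀ t : ℝ, T n - δ < t → t < T n → M ≤ f n t))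
    (A B C : ℝ → ℝ)
    (hA_cont : ContinuousOn A (Set.Icc 0 T₀))
    (hB_cont : ContinuousOn B (Set.Icc 0 T₀))
    (hC_cont : ContinuousOn C (Set.Icc 0 T₀))
    (hA_mono : MonotoneOn A (Set.Icc 0 T₀))
    (hB_mono : MonotoneOn B (Set.Icc 0 T₀))
    (hC_mono : MonotoneOn C (Set.Icc 0 T₀))
    (hA_nonneg : ∀ t ∈ Set.Icc (0 : ℝ) T₀, 0 ≤ A t)
    (hB_nonneg : ∀ t ∈ Set.Icc (0 : ℝ) T₀, 0 ≤ B t)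
    (hC_nonneg : ∀ t ∈ Set.Icc (0 : ℝ) T₀, 0 ≤ C t)
    (hA0 : A 0 = 0) (hBC0 : B 0 * C 0 = 0)
    (hineq : ∀ n, ∀ t ∈ Set.Ico (0 : ℝ) (T n),
      sSup (f n '' Set.Icc 0 t) + ∫ s in (0 : ℝ)..t, g n s ≤
        A t * sSup (f n '' Set.Icc 0 t)
          + B t * (∫ s in (0 : ℝ)..t, g n s) ^ 2 + C t) :
    ∃ T' ∈ Set.Ioc (0 : ℝ) T₀, ∀ n, T' ≤ T n ∧
      ∀ t : ℝ, 0 ≤ t → t < T' → t < T n →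
        f n t + ∫ s in (0 : ℝ)..t, g n s ≤ 2 * C T' := by
  -- Choose T' small so that A T' ≤ 1/2 and B T' * C T' ≤ 1/8
  have h0mem : (0:ℝ) ∈ Icc (0:ℝ) T₀ := ⟨le_refl 0, hT₀.le⟩
  have hφ_cont : ContinuousOn (fun t => A t + B t * C t) (Icc (0:ℝ) T₀) :=
    hA_cont.add (hB_cont.mul hC_cont)
  have hev : ∀ᶠ x in nhdsWithin 0 (Icc (0:ℝ) T₀), A x + B x * C x < 1/8 := by
    have h := hφ_cont 0 h0mem
    rw [ContinuousWithinAt] at h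
    have h8 : Iio (1/8 : ℝ) ∈ nhds (A 0 + B 0 * C 0) := by
      apply Iio_mem_nhds; rw [hA0, hBC0]; norm_num
    exact h h8
  obtain ⟨ε, hε, hball⟩ := Metric.mem_nhdsWithin_iff.mp hev
  set T' := min (ε/2) T₀ with hT'def
  have hT'pos : 0 < T' := lt_min (by positivity) hT₀
  have hT'le : T' ≤ T₀ := min_le_right _ _
  have hT'mem : T' ∈ Icc (0:ℝ) T₀ := ⟨hT'pos.le, hT'le⟩
  have hφT' : A T' + B T' * C T' < 1/8 := by
    refine hball ⟨?_, hT'mem⟩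
    rw [Metric.mem_ball, Real.dist_eq, sub_zero, abs_of_pos hT'pos]
    calc T' ≤ ε/2 := min_le_left _ _
      _ < ε := by linarith
  have hAT' : A T' ≤ 1/2 := by
    have := mul_nonneg (hB_nonneg T' hT'mem) (hC_nonneg T' hT'mem); linarith
  have hBCT' : B T' * C T' ≤ 1/8 := by
    have := hA_nonneg T' hT'mem; linarith
  have hCT' : 0 ≤ C T' := hC_nonneg T' hT'mem
  have hBT' : 0 ≤ B T' := hB_nonneg T' hT'mem
  -- key bound
  have key : ∀ n, ∀ t : ℝ, 0 ≤ t → t < T' → t < T n →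
      f n t + ∫ s in (0:ℝ)..t, g n s ≤ 2 * C T' := by
    intro n t ht0 htT' htTn
    have htI : t ∈ Ico (0:ℝ) (T n) := ⟨ht0, htTn⟩
    have hTn := hT n
    -- membership helpers
    have hsub : ∀ s ∈ Icc (0:ℝ) t, s ∈ Ico (0:ℝ) (T n) :=
      fun s hs => ⟨hs.1, lt_of_le_of_lt hs.2 htTn⟩
    have hsmem : ∀ s ∈ Icc (0:ℝ) t, s ∈ Icc (0:ℝ) T₀ :=
      fun s hs => ⟨hs.1, le_trans hs.2 (le_trans htT'.le hT'le)⟩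
    -- continuity of the primitive
    have hint : IntegrableOn (g n) (Icc (0:ℝ) t) volume := by
      rw [← intervalIntegrable_iff_integrableOn_Icc_of_le ht0]
      exact hg_int n t htI
    have hIcont : ContinuousOn (fun x => ∫ s in (0:ℝ)..x, g n s) (Icc (0:ℝ) t) := by
      have := intervalIntegral.continuousOn_primitive_interval
        (a := 0) (b := t) (μ := volume) (f := g n) (by rwa [uIcc_of_le ht0])
      rwa [uIcc_of_le ht0] at this
    -- nonnegativity of the primitive
    have hInn : ∀ s ∈ Icc (0:ℝ) t, 0 ≤ ∫ u in (0:ℝ)..s, g n u := by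
      intro s hs
      exact intervalIntegral.integral_nonneg hs.1
        (fun u hu => hg_nonneg n u (hsub u ⟨hu.1, le_trans hu.2 hs.2⟩))
    -- sup nonnegativity and f ≤ sup
    have hSnn : ∀ s ∈ Icc (0:ℝ) t, 0 ≤ sSup (f n '' Icc 0 s) := by
      intro s hs
      have h0s : (0:ℝ) ∈ Icc (0:ℝ) s := ⟨le_refl 0, hs.1⟩
      exact le_trans (hf_nonneg n 0 ⟨le_refl 0, hTn.1⟩)
        (le_csSup (hf_bdd n s (hsub s hs)) (mem_image_of_mem _ h0s))
    -- basic inequality for the integral alone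
    have hIineq : ∀ s ∈ Icc (0:ℝ) t,
        (∫ u in (0:ℝ)..s, g n u) ≤ B T' * (∫ u in (0:ℝ)..s, g n u)^2 + C T' := by
      intro s hs
      have hmain := hineq n s (hsub s hs)
      have hsT' : s ≤ T' := le_trans hs.2 htT'.le
      have hAs : A s ≤ 1 := le_trans (hA_mono (hsmem s hs) hT'mem hsT') (by linarith)
      have hBs : B s ≤ B T' := hB_mono (hsmem s hs) hT'mem hsT'
      have hCs : C s ≤ C T' := hC_mono (hsmem s hs) hT'mem hsT'
      have hS := hSnn s hs
      have h1 : A s * sSup (f n '' Icc 0 s) ≤ sSup (f n '' Icc 0 s) := by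
        nlinarith [hA_nonneg s (hsmem s hs)]
      have h2 : B s * (∫ u in (0:ℝ)..s, g n u)^2 ≤ B T' * (∫ u in (0:ℝ)..s, g n u)^2 :=
        mul_le_mul_of_nonneg_right hBs (sq_nonneg _)
      linarith
    -- bootstrap: B T' * I t ≤ 1/2
    have hhalf : ∀ s ∈ Icc (0:ℝ) t, B T' * (∫ u in (0:ℝ)..s, g n u) ≤ 1/2 := by
      by_contra hcon
      push_neg at hcon
      obtain ⟨t₁, ht₁, ht₁gt⟩ := hcon
      set v := min (3/4 : ℝ) (B T' * ∫ u in (0:ℝ)..t₁, g n u) with hv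
      have hv12 : 1/2 < v := lt_min (by norm_num) ht₁gt
      have hcont2 : ContinuousOn (fun x => B T' * ∫ u in (0:ℝ)..x, g n u) (Icc 0 t₁) :=
        (continuousOn_const.mul (hIcont.mono (Icc_subset_Icc le_rfl ht₁.2)))
      have hIv : v ∈ Icc (B T' * ∫ u in (0:ℝ)..(0:ℝ), g n u)
          (B T' * ∫ u in (0:ℝ)..t₁, g n u) := by
        constructor
        · rw [intervalIntegral.integral_same, mul_zero]; linarith
        · exact min_le_right _ _
      obtain ⟨t₂, ht₂, ht₂v⟩ := intermediate_value_Icc ht₁.1 hcont2 hIv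
      have ht₂' : t₂ ∈ Icc (0:ℝ) t := ⟨ht₂.1, le_trans ht₂.2 ht₁.2⟩
      have hI2 := hIineq t₂ ht₂'
      have hI2nn := hInn t₂ ht₂'
      have hv34 : v ≤ 3/4 := min_le_left _ _
      -- from I ≤ (B T' I) I + C' = v I + C' ≤ (3/4) I + C' get I ≤ 4 C'
      have hI4C : (∫ u in (0:ℝ)..t₂, g n u) ≤ 4 * C T' := by
        have : B T' * (∫ u in (0:ℝ)..t₂, g n u)^2
            = v * (∫ u in (0:ℝ)..t₂, g n u) := by rw [← ht₂v]; ring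
        nlinarith
      have : v ≤ 1/2 := by
        rw [← ht₂v]
        nlinarith [mul_le_mul_of_nonneg_left hI4C hBT']
      linarith
    -- conclude
    have hmain := hineq n t ⟨ht0, htTn⟩
    have htmem : t ∈ Icc (0:ℝ) t := ⟨ht0, le_refl t⟩
    have hAt : A t ≤ 1/2 :=
      le_trans (hA_mono (hsmem t htmem) hT'mem htT'.le) hAT'
    have hBt : B t ≤ B T' := hB_mono (hsmem t htmem) hT'mem htT'.le
    have hCt : C t ≤ C T' := hC_mono (hsmem t htmem) hT'mem htT'.le
    have hS := hSnn t htmem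
    have hIn := hInn t htmem
    have hBh := hhalf t htmem
    have hfS : f n t ≤ sSup (f n '' Icc 0 t) :=
      le_csSup (hf_bdd n t htI) (mem_image_of_mem _ htmem)
    have h1 : A t * sSup (f n '' Icc 0 t) ≤ (1/2) * sSup (f n '' Icc 0 t) :=
      mul_le_mul_of_nonneg_right hAt hS
    have h2 : B t * (∫ u in (0:ℝ)..t, g n u)^2 ≤ (1/2) * (∫ u in (0:ℝ)..t, g n u) := by
      nlinarith [sq_nonneg (∫ u in (0:ℝ)..t, g n u),
        mul_le_mul_of_nonneg_right hBh hIn]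
    linarith
  -- assemble
  refine ⟨T', ⟨hT'pos, hT'le⟩, fun n => ⟨?_, fun t ht0 h1 h2 => key n t ht0 h1 h2⟩⟩
  by_contra hcon
  push_neg at hcon
  have hTn := hT n
  have hne : T n ≠ T₀ := ne_of_lt (lt_of_lt_of_le hcon hT'le)
  obtain ⟨δ, hδ, hM⟩ := (hblow n).resolve_left hne (2 * C T' + 1)
  set t := max (T n - δ/2) (T n / 2) with htdef
  have ht0 : 0 ≤ t := le_trans (by linarith [hTn.1] : (0:ℝ) ≤ T n / 2) (le_max_right _ _)
  have htlt : t < T n := max_lt (by linarith) (by linarith [hTn.1])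
  have htgt : T n - δ < t := lt_of_lt_of_le (by linarith) (le_max_left _ _)
  have hfM := hM t htgt htlt
  have hkey := key n t ht0 (lt_trans htlt hcon) htlt
  have hInn : 0 ≤ ∫ u in (0:ℝ)..t, g n u :=
    intervalIntegral.integral_nonneg ht0
      (fun u hu => hg_nonneg n u ⟨hu.1, lt_of_le_of_lt hu.2 htlt⟩)
  linarith
end

section
/- Let T > 0, let u : [0,T] × ℝ³ → ℝ³ be continuous, C¹ in space, 2π-periodic in each spatial coordinate, and divergence-free (Σⱼ ∂ⱼuⱼ = 0), and let w : [0,T] × ℝ³ → ℝ³ be C¹ in time, C² in space, 2π-periodic in each spatial coordinate, with ∂ₜw continuous, and satisfy ∂ₜw + (u·∇)w + ½∇|w|² − Δw = 0 on [0,T] × ℝ³. Then the momentum ∫_Q w(x,t) dx, where Q = [0,2π]³, is independent of t ∈ [0,T]. -/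
/-!
Integrate the equation for `wᵢ` over the period cell `Q`. Every spatial term is a partial
derivative `∂ⱼ g` of a periodic function `g`: this is clear for `½ ∂ᵢ|w|²` and
`Δwᵢ = Σⱼ ∂ⱼ(∂ⱼwᵢ)`, and because `u` is divergence free, `(u·∇)wᵢ = Σⱼ ∂ⱼ(uⱼ wᵢ)`. By the
divergence theorem `∫_Q ∂ⱼ g = 0`, since the contributions of the two faces of `Q` orthogonal
to `eⱼ` cancel by periodicity. Hence `∫_Q ∂ₜwᵢ = 0` at every time, and the fundamental
theorem of calculus in `t`, together with Fubini, shows that `∫_Q wᵢ` is constant.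
-/

open Set Real MeasureTheory

/-- Spatial partial derivative `∂ᵢ f` of a scalar function on `ℝ³`. -/
noncomputable def pd (i : Fin 3) (f : (Fin 3 → ℝ) → ℝ) (x : Fin 3 → ℝ) : ℝ :=
  fderiv ℝ f x (Pi.single i 1)

theorem Fin.insertNth_add_single {α : Type*} [AddZeroClass α] {n : ℕ} (j : Fin (n + 1))
    (c d : α) (y : Fin n → α) :
    (Fin.insertNth j (c + d) y : Fin (n + 1) → α) = Fin.insertNth j c y + Pi.single j d := by
  ext k
  rcases eq_or_ne k j with rfl | hk
  · simp
  · obtain ⟨m, rfl⟩ := Fin.exists_succAbove_eq hk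
    simp

theorem setIntegral_fderiv_single_eq_zero_of_periodic {n : ℕ} {E : Type*}
    [NormedAddCommGroup E] [NormedSpace ℝ E] {a b : Fin (n + 1) → ℝ} (hab : a ≤ b)
    {g : (Fin (n + 1) → ℝ) → E} (hg : ContDiff ℝ 1 g) (j : Fin (n + 1))
    (hper : Function.Periodic g (Pi.single j (b j - a j))) :
    ∫ x in Icc a b, fderiv ℝ g x (Pi.single j 1) = 0 := by
  classical
  have hdiv_eq : ∀ x, ∑ k, (if k = j then fderiv ℝ g x else 0) (Pi.single k 1) =
      fderiv ℝ g x (Pi.single j 1) := fun x => by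
    rw [Finset.sum_eq_single j (fun k _ hk => by simp [hk]) (by simp), if_pos rfl]
  have hdiv := integral_divergence_of_hasFDerivAt_off_countable' a b hab
    (fun k => if k = j then g else 0) (fun k x => if k = j then fderiv ℝ g x else 0)
    ∅ countable_empty
    (fun k => by split_ifs <;> first | exact hg.continuous.continuousOn | exact continuousOn_const)
    (fun x _ k => by
      split_ifs
      · exact (hg.differentiable one_ne_zero x).hasFDerivAt
      · exact hasFDerivAt_const 0 x)
    (by
      simp only [hdiv_eq]
      exact ((hg.continuous_fderiv one_ne_zero).clm_apply continuous_const).continuousOn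
        |>.integrableOn_compact isCompact_Icc)
  simp only [hdiv_eq] at hdiv
  rw [hdiv]
  refine Finset.sum_eq_zero fun k _ => ?_
  split_ifs with hk
  · subst hk
    refine sub_eq_zero.2 (integral_congr_ae (Filter.Eventually.of_forall fun y => ?_))
    simpa [← Fin.insertNth_add_single] using hper (Fin.insertNth k (a k) y)
  · simp

section TimeDerivative

variable {a b t₁ t₂ : ℝ}

theorem intervalIntegral_derivWithin_Icc_eq_sub {E : Type*} [NormedAddCommGroup E]
    [NormedSpace ℝ E] [CompleteSpace E] {f : ℝ → E} (hf : ContDiffOn ℝ 1 f (Icc a b))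
    (ht₁ : t₁ ∈ Icc a b) (ht₂ : t₂ ∈ Icc a b) :
    ∫ s in t₁..t₂, derivWithin f (Icc a b) s = f t₂ - f t₁ := by
  rw [← intervalIntegral.integral_deriv_of_contDiffOn_uIcc (hf.mono (uIcc_subset_Icc ht₁ ht₂))]
  refine intervalIntegral.integral_congr_ae ?_
  filter_upwards [Measure.ae_ne volume a, Measure.ae_ne volume b] with s hsa hsb hs
  have hs' := uIoc_subset_uIcc.trans (uIcc_subset_Icc ht₁ ht₂) hs
  exact derivWithin_of_mem_nhds
    (Icc_mem_nhds (lt_of_le_of_ne hs'.1 (Ne.symm hsa)) (lt_of_le_of_ne hs'.2 hsb))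

variable {X : Type*} [TopologicalSpace X] [MeasurableSpace X] [T2Space X] [OpensMeasurableSpace X]
  {μ : Measure X} [IsFiniteMeasureOnCompacts μ] [SFinite μ] {K : Set X}

theorem setIntegral_eq_of_setIntegral_derivWithin_eq_zero (hK : IsCompact K) {f : ℝ → X → ℝ}
    (hf : ∀ x ∈ K, ContDiffOn ℝ 1 (fun t => f t x) (Icc a b))
    (hf' : ContinuousOn (fun p : ℝ × X => derivWithin (fun s => f s p.2) (Icc a b) p.1)
      (Icc a b ×ˢ K))
    (hint : ∀ t ∈ Icc a b, IntegrableOn (f t) K μ)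
    (hzero : ∀ t ∈ Icc a b, ∫ x in K, derivWithin (fun s => f s x) (Icc a b) t ∂μ = 0)
    (ht₁ : t₁ ∈ Icc a b) (ht₂ : t₂ ∈ Icc a b) :
    ∫ x in K, f t₁ x ∂μ = ∫ x in K, f t₂ x ∂μ := by
  have hsub : uIoc t₁ t₂ ⊆ Icc a b := uIoc_subset_uIcc.trans (uIcc_subset_Icc ht₁ ht₂)
  have hprod : Integrable (Function.uncurry fun s x => derivWithin (fun r => f r x) (Icc a b) s)
      ((volume.restrict (uIoc t₁ t₂)).prod (μ.restrict K)) := by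
    rw [Measure.prod_restrict]
    exact ((hf'.integrableOn_compact (isCompact_Icc.prod hK)).mono_set
      (prod_mono hsub subset_rfl))
  have h_ftc : ∫ x in K, (f t₂ x - f t₁ x) ∂μ =
      ∫ s in t₁..t₂, ∫ x in K, derivWithin (fun r => f r x) (Icc a b) s ∂μ := by
    rw [intervalIntegral_integral_swap hprod]
    exact setIntegral_congr_fun hK.measurableSet fun x hx =>
      (intervalIntegral_derivWithin_Icc_eq_sub (hf x hx) ht₁ ht₂).symm
  rw [intervalIntegral.integral_congr (g := fun _ => 0)
      (fun s hs => hzero s (uIcc_subset_Icc ht₁ ht₂ hs)), intervalIntegral.integral_zero,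
    integral_sub (hint t₂ ht₂) (hint t₁ ht₁), sub_eq_zero] at h_ftc
  exact h_ftc.symm

end TimeDerivative

local notation "Q" => Set.univ.pi fun _ : Fin 3 => Icc (0 : ℝ) (2 * π)

section PartialDerivative

variable {f g : (Fin 3 → ℝ) → ℝ} {x : Fin 3 → ℝ} {i j : Fin 3}

theorem pd_mul (hf : DifferentiableAt ℝ f x) (hg : DifferentiableAt ℝ g x) :
    pd j (fun y => f y * g y) x = pd j f x * g x + f x * pd j g x := by
  simp only [pd, fderiv_fun_mul hf hg, add_apply, smul_apply, smul_eq_mul]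
  ring

theorem continuous_pd (hf : ContDiff ℝ 1 f) : Continuous (pd j f) :=
  (hf.continuous_fderiv one_ne_zero).clm_apply continuous_const

theorem contDiff_pd (hf : ContDiff ℝ 2 f) : ContDiff ℝ 1 (pd j f) :=
  (hf.fderiv_right le_rfl).clm_apply contDiff_const

theorem Function.Periodic.pd {c : Fin 3 → ℝ} (hf : Function.Periodic f c) :
    Function.Periodic (pd j f) c := fun x => by
  unfold _root_.pd
  rw [← fderiv_comp_add_right, hf.funext]

theorem setIntegral_pd_eq_zero (hf : ContDiff ℝ 1 f)
    (hper : Function.Periodic f (Pi.single j (2 * π))) : ∫ x in Q, pd j f x = 0 := by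
  rw [pi_univ_Icc]
  exact setIntegral_fderiv_single_eq_zero_of_periodic (fun _ => by positivity) hf j
    (by simpa using hper)

theorem sum_mul_pd_eq_sum_pd_mul {u : (Fin 3 → ℝ) → Fin 3 → ℝ}
    (hu : ∀ j, DifferentiableAt ℝ (fun y => u y j) x) (hf : DifferentiableAt ℝ f x)
    (hdiv : ∑ j, pd j (fun y => u y j) x = 0) :
    ∑ j, u x j * pd j f x = ∑ j, pd j (fun y => u y j * f y) x := by
  simp only [pd_mul (hu _) hf, Finset.sum_add_distrib, ← Finset.sum_mul, hdiv, zero_mul,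
    zero_add]

end PartialDerivative

theorem setIntegral_convection_sub_laplacian_eq_zero {u v : (Fin 3 → ℝ) → Fin 3 → ℝ}
    (hu : ContDiff ℝ 1 u) (hv : ContDiff ℝ 2 v)
    (hu_per : ∀ j, Function.Periodic u (Pi.single j (2 * π)))
    (hv_per : ∀ j, Function.Periodic v (Pi.single j (2 * π)))
    (hu_div : ∀ x, ∑ j, pd j (fun y => u y j) x = 0) (i : Fin 3) :
    ∫ x in Q, (∑ j, u x j * pd j (fun y => v y i) x
      + (1 / 2) * pd i (fun y => ∑ j, v y j ^ 2) x
      - ∑ j, pd j (fun y => pd j (fun z => v z i) y) x) = 0 := by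
  have hu_j : ∀ j, ContDiff ℝ 1 (fun y => u y j) := contDiff_pi.1 hu
  have hv_j : ∀ j, ContDiff ℝ 2 (fun y => v y j) := contDiff_pi.1 hv
  have hsq : ContDiff ℝ 1 (fun y => ∑ j, v y j ^ 2) :=
    ContDiff.sum fun j _ => ((hv_j j).of_le one_le_two).pow 2
  have hflux : ∀ j, ContDiff ℝ 1 (fun y => u y j * v y i) :=
    fun j => (hu_j j).mul ((hv_j i).of_le one_le_two)
  have hint : ∀ {j f}, ContDiff ℝ 1 f → IntegrableOn (pd j f) Q :=
    fun hf => (continuous_pd hf).continuousOn.integrableOn_compact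
      (isCompact_univ_pi fun _ => isCompact_Icc)
  have hper_i : ∀ j, Function.Periodic (fun y => v y i) (Pi.single j (2 * π)) :=
    fun j => (hv_per j).comp (· i)
  have hA : IntegrableOn (fun x => ∑ j, pd j (fun y => u y j * v y i) x) Q :=
    integrable_finsetSum _ fun j _ => hint (hflux j)
  have hB : IntegrableOn (fun x => (1 / 2) * pd i (fun y => ∑ j, v y j ^ 2) x) Q :=
    (hint hsq).const_mul _
  have hC : IntegrableOn (fun x => ∑ j, pd j (fun y => pd j (fun z => v z i) y) x) Q :=
    integrable_finsetSum _ fun j _ => hint (contDiff_pd (hv_j i))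
  rw [setIntegral_congr_fun (.univ_pi fun _ => measurableSet_Icc) fun x _ => by
      rw [sum_mul_pd_eq_sum_pd_mul (fun j => (hu_j j).differentiable one_ne_zero x)
        ((hv_j i).differentiable two_ne_zero x) (hu_div x)],
    integral_sub (Integrable.fun_add hA hB) hC, integral_add hA hB,
    integral_finsetSum _ fun j _ => hint (hflux j),
    integral_finsetSum _ fun j _ => hint (contDiff_pd (hv_j i)), integral_const_mul]
  have h_conv : ∀ j, ∫ x in Q, pd j (fun y => u y j * v y i) x = 0 := fun j =>
    setIntegral_pd_eq_zero (hflux j) (((hu_per j).comp (· j)).mul (hper_i j))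
  have h_lap : ∀ j, ∫ x in Q, pd j (pd j fun y => v y i) x = 0 := fun j =>
    setIntegral_pd_eq_zero (contDiff_pd (hv_j i)) ((hper_i j).pd (j := j))
  simp only [h_conv, h_lap, setIntegral_pd_eq_zero hsq ((hv_per i).comp fun z => ∑ j, z j ^ 2),
    Finset.sum_const_zero, mul_zero, add_zero, sub_zero]

theorem momentum_conservation_general
    (T : ℝ)
    (u w : ℝ → (Fin 3 → ℝ) → Fin 3 → ℝ)
    -- `u` is continuous on `[0,T] × ℝ³` and C¹ in space
    (hu_space : ∀ t ∈ Set.Icc (0 : ℝ) T, ContDiff ℝ 1 (u t))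
    -- `u` is 2π-periodic in each spatial coordinate
    (hu_per : ∀ t ∈ Set.Icc (0 : ℝ) T, ∀ x, ∀ j : Fin 3,
      u t (x + Pi.single j (2 * Real.pi)) = u t x)
    -- `u` is divergence free
    (hu_div : ∀ t ∈ Set.Icc (0 : ℝ) T, ∀ x,
      ∑ j : Fin 3, pd j (fun y => u t y j) x = 0)
    -- `w` is C¹ in time and C² in space
    (hw_time : ∀ x, ContDiffOn ℝ 1 (fun t => w t x) (Set.Icc 0 T))
    (hw_space : ∀ t ∈ Set.Icc (0 : ℝ) T, ContDiff ℝ 2 (w t))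
    -- `w` is 2π-periodic in each spatial coordinate
    (hw_per : ∀ t ∈ Set.Icc (0 : ℝ) T, ∀ x, ∀ j : Fin 3,
      w t (x + Pi.single j (2 * Real.pi)) = w t x)
    -- `∂ₜw` is continuous on `[0,T] × ℝ³`
    (hwt_cont : ∀ i : Fin 3, ContinuousOn
      (fun p : ℝ × (Fin 3 → ℝ) => derivWithin (fun s => w s p.2 i) (Set.Icc 0 T) p.1)
      (Set.Icc 0 T ×ˢ Set.univ))
    -- the equation `∂ₜw + (u·∇)w + ½∇|w|² − Δw = 0` on `[0,T] × ℝ³`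
    (heq : ∀ t ∈ Set.Icc (0 : ℝ) T, ∀ x, ∀ i : Fin 3,
      derivWithin (fun s => w s x i) (Set.Icc 0 T) t
        + ∑ j : Fin 3, u t x j * pd j (fun y => w t y i) x
        + (1 / 2) * pd i (fun y => ∑ j : Fin 3, (w t y j) ^ 2) x
        - ∑ j : Fin 3, pd j (fun y => pd j (fun z => w t z i) y) x = 0) :
    -- conclusion: `∫_Q w(x,t) dx` is independent of `t ∈ [0,T]`
    ∀ t₁ ∈ Set.Icc (0 : ℝ) T, ∀ t₂ ∈ Set.Icc (0 : ℝ) T, ∀ i : Fin 3,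
      (∫ x in Set.univ.pi fun _ : Fin 3 => Set.Icc (0 : ℝ) (2 * Real.pi),
        w t₁ x i) =
      ∫ x in Set.univ.pi fun _ : Fin 3 => Set.Icc (0 : ℝ) (2 * Real.pi),
        w t₂ x i := by
  intro t₁ ht₁ t₂ ht₂ i
  refine setIntegral_eq_of_setIntegral_derivWithin_eq_zero (f := fun t x => w t x i)
    (isCompact_univ_pi fun _ => isCompact_Icc) (fun x _ => contDiffOn_pi.1 (hw_time x) i)
    ((hwt_cont i).mono (prod_mono subset_rfl (subset_univ _)))
    (fun t ht => ((continuous_apply i).comp (hw_space t ht).continuous).continuousOn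
      |>.integrableOn_compact (isCompact_univ_pi fun _ => isCompact_Icc))
    (fun t ht => ?_) ht₁ ht₂
  have h_mean := setIntegral_convection_sub_laplacian_eq_zero (hu_space t ht) (hw_space t ht)
    (fun j x => hu_per t ht x j) (fun j x => hw_per t ht x j) (hu_div t ht) i
  rw [← neg_eq_zero, ← integral_neg]
  refine (setIntegral_congr_fun (.univ_pi fun _ => measurableSet_Icc) fun x _ => ?_).trans h_mean
  linarith [heq t ht x i]

/-- Conservation of momentum: for a spatially periodic classical solution `w`
of `∂ₜw + (u·∇)w + ½∇|w|² − Δw = 0` with periodic divergence-free drift `u`,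
the momentum `∫_Q w(x,t) dx` over the period cell `Q = [0,2π]³` is constant. -/
theorem momentum_conservation
    (T : ℝ) (hT : 0 < T)
    (u w : ℝ → (Fin 3 → ℝ) → Fin 3 → ℝ)
    -- `u` is continuous on `[0,T] × ℝ³` and C¹ in space
    (hu_cont : ContinuousOn (fun p : ℝ × (Fin 3 → ℝ) => u p.1 p.2)
      (Set.Icc 0 T ×ˢ Set.univ))
    (hu_space : ∀ t ∈ Set.Icc (0 : ℝ) T, ContDiff ℝ 1 (u t))
    -- `u` is 2π-periodic in each spatial coordinate
    (hu_per : ∀ t ∈ Set.Icc (0 : ℝ) T, ∀ x, ∀ j : Fin 3,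
      u t (x + Pi.single j (2 * Real.pi)) = u t x)
    -- `u` is divergence free
    (hu_div : ∀ t ∈ Set.Icc (0 : ℝ) T, ∀ x,
      ∑ j : Fin 3, pd j (fun y => u t y j) x = 0)
    -- `w` is C¹ in time and C² in space
    (hw_time : ∀ x, ContDiffOn ℝ 1 (fun t => w t x) (Set.Icc 0 T))
    (hw_space : ∀ t ∈ Set.Icc (0 : ℝ) T, ContDiff ℝ 2 (w t))
    -- `w` is 2π-periodic in each spatial coordinate
    (hw_per : ∀ t ∈ Set.Icc (0 : ℝ) T, ∀ x, ∀ j : Fin 3,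
      w t (x + Pi.single j (2 * Real.pi)) = w t x)
    -- `∂ₜw` is continuous on `[0,T] × ℝ³`
    (hwt_cont : ∀ i : Fin 3, ContinuousOn
      (fun p : ℝ × (Fin 3 → ℝ) => derivWithin (fun s => w s p.2 i) (Set.Icc 0 T) p.1)
      (Set.Icc 0 T ×ˢ Set.univ))
    -- the equation `∂ₜw + (u·∇)w + ½∇|w|² − Δw = 0` on `[0,T] × ℝ³`
    (heq : ∀ t ∈ Set.Icc (0 : ℝ) T, ∀ x, ∀ i : Fin 3,
      derivWithin (fun s => w s x i) (Set.Icc 0 T) t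
        + ∑ j : Fin 3, u t x j * pd j (fun y => w t y i) x
        + (1 / 2) * pd i (fun y => ∑ j : Fin 3, (w t y j) ^ 2) x
        - ∑ j : Fin 3, pd j (fun y => pd j (fun z => w t z i) y) x = 0) :
    -- conclusion: `∫_Q w(x,t) dx` is independent of `t ∈ [0,T]`
    ∀ t₁ ∈ Set.Icc (0 : ℝ) T, ∀ t₂ ∈ Set.Icc (0 : ℝ) T, ∀ i : Fin 3,
      (∫ x in Set.univ.pi fun _ : Fin 3 => Set.Icc (0 : ℝ) (2 * Real.pi),
        w t₁ x i) =
      ∫ x in Set.univ.pi fun _ : Fin 3 => Set.Icc (0 : ℝ) (2 * Real.pi),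
        w t₂ x i :=
  momentum_conservation_general T u w hu_space hu_per hu_div hw_time hw_space hw_per hwt_cont heq
end
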